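/- Let R ~ χ²_d (chi-squared with d degrees of freedom). For all x > 0, P(R − d > 2√(dx) + 2x) ≤ e^{−x}. -/

import Mathlib

open MeasureTheory ProbabilityTheory

/-- The chi-squared distribution with `d` degrees of freedom, as `Gamma(d/2, 1/2)`. -/
noncomputable def chiSqMeasure (d : ℕ) : Measure ℝ := gammaMeasure ((d : ℝ) / 2) (1 / 2)

lemma gamma_half_lintegral_exp (k t : ℝ) (hk : 0 < k) (ht : 0 < t) (ht2 : t < 1/2) :
    ∫⁻ y, ENNReal.ofReal (Real.exp (t * y)) ∂(gammaMeasure k (1/2))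
      = ENNReal.ofReal ((1/2 / (1/2 - t)) ^ k) := by
  have hr' : (0:ℝ) < 1/2 - t := by linarith
  have hmeas : Measurable (gammaPDF k (1/2)) :=
    (measurable_gammaPDFReal k (1/2)).ennreal_ofReal
  rw [gammaMeasure, lintegral_withDensity_eq_lintegral_mul _ hmeas
    (by fun_prop)]
  have hpt : ∀ y : ℝ, (gammaPDF k (1/2) * fun y => ENNReal.ofReal (Real.exp (t * y))) y
      = ENNReal.ofReal ((1/2 / (1/2 - t)) ^ k) * gammaPDF k (1/2 - t) y := by
    intro y
    simp only [Pi.mul_apply]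
    rcases lt_or_ge y 0 with hy | hy
    · rw [gammaPDF_of_neg hy, gammaPDF_of_neg hy, zero_mul, mul_zero]
    · rw [gammaPDF_of_nonneg hy, gammaPDF_of_nonneg hy,
        ← ENNReal.ofReal_mul (by positivity), ← ENNReal.ofReal_mul (by positivity)]
      congr 1
      have hpow : (1/2 / (1/2 - t) : ℝ) ^ k * (1/2 - t) ^ k = (1/2 : ℝ) ^ k := by
        rw [← Real.mul_rpow (by positivity) (by positivity)]
        rw [div_mul_cancel₀]
        positivity
      have hexp : Real.exp (-(1/2 * y)) * Real.exp (t * y)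
          = Real.exp (-((1/2 - t) * y)) := by
        rw [← Real.exp_add]; ring_nf
      rw [← hpow, ← hexp]
      ring
  simp_rw [hpt]
  rw [lintegral_const_mul _ (show Measurable (gammaPDF k (1/2 - t)) from
    (measurable_gammaPDFReal _ _).ennreal_ofReal),
    lintegral_gammaPDF_eq_one hk hr', mul_one]

theorem stmt9 (d : ℕ) (hd : 1 ≤ d) (x : ℝ) (hx : 0 < x) :
    chiSqMeasure d {r : ℝ | (d : ℝ) + (2 * Real.sqrt (d * x) + 2 * x) < r} ≤
      ENNReal.ofReal (Real.exp (-x)) := by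
  have hd0 : (0:ℝ) < d := by exact_mod_cast hd
  set s : ℝ := Real.sqrt (x / d) with hs
  have hs0 : 0 < s := Real.sqrt_pos.mpr (by positivity)
  have hs2 : s ^ 2 = x / d := Real.sq_sqrt (by positivity)
  have hsd : Real.sqrt ((d:ℝ) * x) = d * s := by
    rw [hs, ← Real.sqrt_sq hd0.le, ← Real.sqrt_mul (by positivity)]
    congr 1; field_simp; ring_nf; exact Real.sq_sqrt (by positivity)
  set a : ℝ := d + (2 * Real.sqrt (d * x) + 2 * x) with ha
  have hax : a = d * (1 + 2*s + 2*s^2) := by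
    rw [ha, hsd]
    have : x = d * s^2 := by rw [hs2]; field_simp
    rw [this]; ring
  have ha0 : (0:ℝ) < a := by rw [hax]; positivity
  have had : (d:ℝ) < a := by
    rw [hax]; nlinarith
  set t : ℝ := (a - d) / (2 * a) with htdef
  have ht0 : 0 < t := by apply div_pos <;> linarith
  have ht2 : t < 1/2 := by
    rw [htdef, div_lt_iff₀ (by linarith)]; linarith
  have hhalf : (1/2 : ℝ) - t = d / (2 * a) := by
    rw [htdef]; field_simp; ring
  have hratio : (1/2 : ℝ) / (1/2 - t) = a / d := by
    rw [hhalf]; field_simp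
  -- Chernoff bound
  have hk : (0:ℝ) < (d:ℝ)/2 := by positivity
  have key : chiSqMeasure d {r : ℝ | a < r}
      ≤ ENNReal.ofReal (Real.exp (-(t*a))) * ENNReal.ofReal ((a/d) ^ ((d:ℝ)/2)) := by
    have step1 : chiSqMeasure d {r : ℝ | a < r}
        ≤ ∫⁻ y, ENNReal.ofReal (Real.exp (-(t*a))) * ENNReal.ofReal (Real.exp (t*y))
            ∂(chiSqMeasure d) := by
      have hset : MeasurableSet {r : ℝ | a < r} := measurableSet_Ioi
      calc chiSqMeasure d {r : ℝ | a < r}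
          = ∫⁻ y in {r : ℝ | a < r}, 1 ∂(chiSqMeasure d) := by
            rw [setLIntegral_one]
        _ ≤ ∫⁻ y in {r : ℝ | a < r},
              ENNReal.ofReal (Real.exp (-(t*a))) * ENNReal.ofReal (Real.exp (t*y))
              ∂(chiSqMeasure d) := by
            apply setLIntegral_mono' hset
            intro y hy
            rw [← ENNReal.ofReal_mul (by positivity), ← Real.exp_add]
            refine ENNReal.one_le_ofReal.mpr (Real.one_le_exp ?_)
            have : a < y := hy
            nlinarith
        _ ≤ _ := setLIntegral_le_lintegral _ _
    refine step1.trans ?_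
    rw [lintegral_const_mul _ (by fun_prop)]
    rw [chiSqMeasure, gamma_half_lintegral_exp _ t hk ht0 ht2, hratio]
  refine (key.trans ?_)
  rw [← ENNReal.ofReal_mul (by positivity)]
  apply ENNReal.ofReal_le_ofReal
  -- real inequality: exp(-ta) * (a/d)^(d/2) ≤ exp(-x)
  have hlog : (a / d : ℝ) ^ ((d:ℝ)/2) = Real.exp ((d:ℝ)/2 * Real.log (a/d)) := by
    rw [← Real.log_rpow (by positivity), Real.exp_log (by positivity)]
  rw [hlog, ← Real.exp_add, Real.exp_le_exp]
  -- need: -(t*a) + d/2 * log(a/d) ≤ -x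
  have hta : t * a = (a - d)/2 := by
    rw [htdef]; field_simp
  have hxds : x = d * s^2 := by rw [hs2]; field_simp
  have hlogle : Real.log (a/d) ≤ 2*s := by
    have h1 : (a/d : ℝ) = 1 + 2*s + 2*s^2 := by rw [hax]; field_simp
    have h2 : (1:ℝ) + 2*s + 2*s^2 ≤ Real.exp (2*s) := by
      have := Real.quadratic_le_exp_of_nonneg (x := 2*s) (by positivity)
      nlinarith
    calc Real.log (a/d) ≤ Real.log (Real.exp (2*s)) := by
          apply Real.log_le_log (by rw [h1]; positivity) (by rw [h1]; exact h2)
      _ = 2*s := Real.log_exp _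
  have : (d:ℝ)/2 * Real.log (a/d) ≤ d * s := by nlinarith
  have haa : (a - d)/2 = d*s + x := by
    rw [ha, hsd, hxds]; ring
  rw [hta, haa]
  linarith
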